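/- arXiv:2601.05906 — 3 statements merged into one kernel-verified Lean document; each statement's English description precedes it below -/
import Mathlib

section
/- Let (X_i)_{i≥1} be independent and identically distributed real-valued random variables with E[X_1^2] < ∞, and let λ > 0. For each R > 0, let N_R be a Poisson random variable with mean λR that is independent of the sequence (X_i)_{i≥1}. Then E[ max_{1≤i≤N_R} X_i^2 ] / R → 0 as R → ∞, where the maximum over an empty index set is taken to be 0. -/
/-!
For every level `M ≥ 0`, the largest of the squares `X₁², …, X_N²` is at most `M` plus the sum of
those squares exceeding `M`. Since `N` is independent of the identically distributed sequence,
Wald's identity gives `E[∑_{i ≤ N} X_i² 1{X_i² > M}] = E[N] · E[X₁²; X₁² > M] = λR · E[X₁²; X₁² > M]`.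
Choosing `M = √R` and dividing by `R` bounds the ratio by `1/√R + λ E[X₁²; X₁² > √R]`, and the
second term vanishes as `R → ∞` because `X₁²` is integrable.
-/

open MeasureTheory ProbabilityTheory Filter Topology
open scoped ENNReal NNReal Nat

theorem Finset.fold_max_le_add_sum_filter_lt {ι : Type*} (s : Finset ι) (f : ι → ℝ) {M : ℝ}
    (hM : 0 ≤ M) : s.fold max 0 f ≤ M + ∑ i ∈ s with M < f i, f i := by
  have hpos : ∀ i ∈ s.filter (M < f ·), 0 ≤ f i :=
    fun i hi => hM.trans (Finset.mem_filter.1 hi).2.le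
  have hsum : 0 ≤ ∑ i ∈ s with M < f i, f i := Finset.sum_nonneg hpos
  refine (Finset.fold_max_le _).2 ⟨by linarith, fun i hi => ?_⟩
  by_cases hfi : M < f i
  · linarith [Finset.single_le_sum hpos (Finset.mem_filter.2 ⟨hi, hfi⟩)]
  · linarith [not_lt.1 hfi]

theorem ENNReal.ofReal_fold_max_le_add_sum_indicator {ι : Type*} (s : Finset ι) (f : ι → ℝ)
    {M : ℝ} (hM : 0 ≤ M) :
    ENNReal.ofReal (s.fold max 0 f)
      ≤ ENNReal.ofReal M + ∑ i ∈ s, (Set.Ioi M).indicator ENNReal.ofReal (f i) := by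
  calc _ ≤ ENNReal.ofReal (M + ∑ i ∈ s with M < f i, f i) :=
        ENNReal.ofReal_le_ofReal (s.fold_max_le_add_sum_filter_lt f hM)
    _ = _ := by
      have hpos : ∀ i ∈ s.filter (M < f ·), 0 ≤ f i :=
        fun i hi => hM.trans (Finset.mem_filter.1 hi).2.le
      rw [ENNReal.ofReal_add hM (Finset.sum_nonneg hpos), ENNReal.ofReal_sum_of_nonneg hpos,
        Finset.sum_filter]
      simp only [Set.indicator_apply, Set.mem_Ioi]

namespace MeasureTheory

variable {Ω : Type*} [MeasurableSpace Ω] {P : Measure Ω}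

theorem integral_le_of_lintegral_ofReal_le {f : Ω → ℝ} (hf : ∀ ω, 0 ≤ f ω) {b : ℝ} (hb : 0 ≤ b)
    (h : ∫⁻ ω, ENNReal.ofReal (f ω) ∂P ≤ ENNReal.ofReal b) : ∫ ω, f ω ∂P ≤ b :=
  calc _ ≤ ‖∫ ω, f ω ∂P‖ := Real.le_norm_self _
    _ ≤ _ := norm_integral_le_lintegral_norm _
    _ ≤ b := ENNReal.toReal_le_of_le_ofReal hb (by simpa only [Real.norm_of_nonneg (hf _)])

theorem lintegral_indicator_Ioi_ofReal_eq_ofReal_setIntegral {g : Ω → ℝ} (hg : Measurable g)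
    (hgi : Integrable g P) {M : ℝ} (hM : 0 ≤ M) :
    ∫⁻ ω, (Set.Ioi M).indicator ENNReal.ofReal (g ω) ∂P
      = ENNReal.ofReal (∫ ω in {ω | M < g ω}, g ω ∂P) := by
  have hS : MeasurableSet {ω | M < g ω} := measurableSet_lt measurable_const hg
  rw [ofReal_integral_eq_lintegral_ofReal hgi.integrableOn
      ((ae_restrict_iff' hS).2 (ae_of_all _ fun ω (hω : M < g ω) => hM.trans hω.le)),
    ← lintegral_indicator hS]
  rfl

theorem tendsto_setIntegral_lt_atTop_zero {E : Type*} [NormedAddCommGroup E] [NormedSpace ℝ E]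
    {f : Ω → ℝ} (hf : Measurable f) {g : Ω → E} (hg : Integrable g P) :
    Tendsto (fun M : ℝ => ∫ ω in {ω | M < f ω}, g ω ∂P) atTop (𝓝 0) := by
  have h := tendsto_setIntegral_of_antitone (μ := P) (f := g) (s := fun M : ℝ => {ω | M < f ω})
    (fun M => measurableSet_lt measurable_const hf)
    (fun M M' hMM' ω hω => lt_of_le_of_lt hMM' hω) ⟨0, hg.integrableOn⟩
  have hempty : ⋂ M : ℝ, {ω | M < f ω} = ∅ :=
    Set.iInter_eq_empty_iff.2 fun ω => ⟨f ω, (lt_irrefl (f ω) ·)⟩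
  rwa [hempty, Measure.restrict_empty, integral_zero_measure] at h

end MeasureTheory

namespace ProbabilityTheory

variable {Ω : Type*} [MeasurableSpace Ω] {P : Measure Ω}

theorem hasSum_natCast_mul_poissonMeasure (r : ℝ≥0) :
    HasSum (fun n : ℕ => n * (Real.exp (-r) * r ^ n / n !)) r := by
  have hshift : ∀ n : ℕ, ((n + 1 : ℕ) : ℝ) * (Real.exp (-r) * r ^ (n + 1) / (n + 1)!)
      = r * (Real.exp (-r) * r ^ n / n !) := fun n => by
    rw [Nat.factorial_succ, pow_succ]
    push_cast
    field_simp
  have h := (hasSum_one_poissonMeasure r).mul_left (r : ℝ)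
  rw [mul_one, ← funext hshift] at h
  exact (hasSum_nat_add_iff' 1).1 (by simpa using h)

theorem lintegral_natCast_poissonMeasure (r : ℝ≥0) :
    ∫⁻ n, (n : ℝ≥0∞) ∂poissonMeasure r = r := by
  have hsum := hasSum_natCast_mul_poissonMeasure r
  have hterm : ∀ n : ℕ, (n : ℝ≥0∞) * ENNReal.ofReal (Real.exp (-r) * r ^ n / n !)
      = ENNReal.ofReal (n * (Real.exp (-r) * r ^ n / n !)) := fun n => by
    rw [ENNReal.ofReal_mul n.cast_nonneg, ENNReal.ofReal_natCast]
  rw [lintegral_countable']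
  simp_rw [poissonMeasure_singleton, hterm]
  rw [← ENNReal.ofReal_tsum_of_nonneg (fun n => by positivity) hsum.summable, hsum.tsum_eq,
    ENNReal.ofReal_coe_nnreal]

theorem lintegral_natCast_eq_of_measure_eq_poisson {N : Ω → ℕ} (hN : Measurable N) {μ : ℝ}
    (hμ : 0 ≤ μ) (h : ∀ k : ℕ, P {ω | N ω = k} = ENNReal.ofReal (Real.exp (-μ) * μ ^ k / k !)) :
    ∫⁻ ω, (N ω : ℝ≥0∞) ∂P = ENNReal.ofReal μ := by
  have hlaw : P.map N = poissonMeasure μ.toNNReal := Measure.ext_of_singleton fun k => by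
    rw [Measure.map_apply hN (measurableSet_singleton k), poissonMeasure_singleton,
      Real.coe_toNNReal _ hμ, ← h k]
    rfl
  rw [← lintegral_map .of_discrete hN, hlaw, lintegral_natCast_poissonMeasure]
  rfl

theorem lintegral_sum_Icc_eq_lintegral_mul_lintegral {α : Type*} [MeasurableSpace α]
    [IsFiniteMeasure P] {X : ℕ → Ω → α} (hX : ∀ i, Measurable (X i))
    (hident : ∀ i, P.map (X i) = P.map (X 1)) {N : Ω → ℕ} (hN : Measurable N)
    (hind : IndepFun N (fun ω i => X i ω) P) {G : α → ℝ≥0∞} (hG : Measurable G) :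
    ∫⁻ ω, ∑ i ∈ Finset.Icc 1 (N ω), G (X i ω) ∂P = (∫⁻ ω, N ω ∂P) * ∫⁻ ω, G (X 1 ω) ∂P := by
  set Y : Ω → ℕ → α := fun ω i => X i ω
  have hY : Measurable Y := measurable_pi_lambda _ hX
  have hGi : ∀ i, Measurable fun y : ℕ → α => G (y i) := fun i => hG.comp (measurable_pi_apply i)
  set F : ℕ × (ℕ → α) → ℝ≥0∞ := fun p => ∑ i ∈ Finset.Icc 1 p.1, G (p.2 i)
  have hF : Measurable F := measurable_from_prod_countable_right fun n =>
    Finset.measurable_sum (Finset.Icc 1 n) fun i _ => hGi i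
  have hcoord : ∀ i, ∫⁻ y, G (y i) ∂P.map Y = ∫⁻ ω, G (X 1 ω) ∂P := fun i => by
    rw [lintegral_map (hGi i) hY, ← lintegral_map hG (hX i), hident i, lintegral_map hG (hX 1)]
  have hinner : ∀ n, ∫⁻ y, F (n, y) ∂P.map Y = n * ∫⁻ ω, G (X 1 ω) ∂P := fun n => by
    simp only [F, lintegral_finsetSum _ fun i _ => hGi i, hcoord, Finset.sum_const,
      Nat.card_Icc, add_tsub_cancel_right, nsmul_eq_mul]
  calc ∫⁻ ω, F (N ω, Y ω) ∂P
      = ∫⁻ p, F p ∂(P.map N).prod (P.map Y) := by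
        rw [← (indepFun_iff_map_prod_eq_prod_map_map hN.aemeasurable hY.aemeasurable).1 hind,
          lintegral_map hF (hN.prodMk hY)]
    _ = ∫⁻ n, n * ∫⁻ ω, G (X 1 ω) ∂P ∂P.map N := by
        rw [lintegral_prod _ hF.aemeasurable]
        simp_rw [hinner]
    _ = (∫⁻ ω, N ω ∂P) * ∫⁻ ω, G (X 1 ω) ∂P := by
        rw [lintegral_mul_const _ .of_discrete, lintegral_map .of_discrete hN]

theorem integral_fold_max_sq_le_add_mul_setIntegral [IsProbabilityMeasure P]
    {X : ℕ → Ω → ℝ} (hX : ∀ i, Measurable (X i)) (hident : ∀ i, P.map (X i) = P.map (X 1))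
    (hXsq : Integrable (fun ω => X 1 ω ^ 2) P) {N : Ω → ℕ} (hN : Measurable N) {μ : ℝ}
    (hμ : 0 ≤ μ) (hNmean : ∫⁻ ω, (N ω : ℝ≥0∞) ∂P = ENNReal.ofReal μ)
    (hind : IndepFun N (fun ω i => X i ω) P) {M : ℝ} (hM : 0 ≤ M) :
    ∫ ω, Finset.fold max 0 (fun i => X i ω ^ 2) (Finset.Icc 1 (N ω)) ∂P
      ≤ M + μ * ∫ ω in {ω | M < X 1 ω ^ 2}, X 1 ω ^ 2 ∂P := by
  set T := ∫ ω in {ω | M < X 1 ω ^ 2}, X 1 ω ^ 2 ∂P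
  set G : ℝ → ℝ≥0∞ := fun x => (Set.Ioi M).indicator ENNReal.ofReal (x ^ 2)
  have hG : Measurable G :=
    (ENNReal.measurable_ofReal.indicator measurableSet_Ioi).comp (measurable_id.pow_const 2)
  have hT : ∫⁻ ω, G (X 1 ω) ∂P = ENNReal.ofReal T :=
    lintegral_indicator_Ioi_ofReal_eq_ofReal_setIntegral ((hX 1).pow_const 2) hXsq hM
  refine integral_le_of_lintegral_ofReal_le (fun ω => (Finset.le_fold_max _).2 (Or.inl le_rfl))
    (by positivity) ?_
  calc _ ≤ ∫⁻ ω, (ENNReal.ofReal M + ∑ i ∈ Finset.Icc 1 (N ω), G (X i ω)) ∂P :=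
        lintegral_mono fun ω => ENNReal.ofReal_fold_max_le_add_sum_indicator _ _ hM
    _ = ENNReal.ofReal M + ENNReal.ofReal μ * ENNReal.ofReal T := by
        rw [lintegral_add_left measurable_const, lintegral_const, measure_univ, mul_one,
          lintegral_sum_Icc_eq_lintegral_mul_lintegral hX hident hN hind hG, hNmean, hT]
    _ = ENNReal.ofReal (M + μ * T) := by
        rw [ENNReal.ofReal_add hM (by positivity), ENNReal.ofReal_mul hμ]

end ProbabilityTheory

theorem poisson_max_square_expectation_tendsto_zero_general
    {Ω : Type*} [MeasurableSpace Ω] (P : Measure Ω) [IsProbabilityMeasure P]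
    (X : ℕ → Ω → ℝ) (hXmeas : ∀ i, Measurable (X i))
    (hXident : ∀ i, Measure.map (X i) P = Measure.map (X 1) P)
    (hXsq : Integrable (fun ω => (X 1 ω) ^ 2) P)
    (lam : ℝ) (hlam : 0 < lam)
    (N : ℝ → Ω → ℕ) (hNmeas : ∀ R, Measurable (N R))
    (hNpoisson : ∀ R > 0, ∀ k : ℕ,
      P {ω | N R ω = k} =
        ENNReal.ofReal (Real.exp (-(lam * R)) * (lam * R) ^ k / (Nat.factorial k)))
    (hNindep : ∀ R > 0, IndepFun (N R) (fun ω i => X i ω) P) :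
    Tendsto
      (fun R : ℝ =>
        (∫ ω, Finset.fold max 0 (fun i => (X i ω) ^ 2) (Finset.Icc 1 (N R ω)) ∂P) / R)
      atTop (nhds 0) := by
  set T : ℝ → ℝ := fun M => ∫ ω in {ω | M < X 1 ω ^ 2}, X 1 ω ^ 2 ∂P
  have hbound : ∀ R > 0,
      (∫ ω, Finset.fold max 0 (fun i => (X i ω) ^ 2) (Finset.Icc 1 (N R ω)) ∂P) / R
        ≤ (√R)⁻¹ + lam * T √R := fun R hR => by
    have hlamR : 0 ≤ lam * R := by positivity
    have h := integral_fold_max_sq_le_add_mul_setIntegral hXmeas hXident hXsq (hNmeas R) hlamR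
      (lintegral_natCast_eq_of_measure_eq_poisson (hNmeas R) hlamR (hNpoisson R hR))
      (hNindep R hR) (Real.sqrt_nonneg R)
    rw [div_le_iff₀ hR]
    calc _ ≤ √R + lam * R * T √R := h
      _ = ((√R)⁻¹ + lam * T √R) * R := by
        rw [add_mul, inv_mul_eq_div, Real.div_sqrt]
        ring
  have hlim : Tendsto (fun R => (√R)⁻¹ + lam * T √R) atTop (𝓝 0) := by
    simpa using (tendsto_inv_atTop_zero.comp Real.tendsto_sqrt_atTop).add
      (((tendsto_setIntegral_lt_atTop_zero ((hXmeas 1).pow_const 2) hXsq).comp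
        Real.tendsto_sqrt_atTop).const_mul lam)
  refine tendsto_of_tendsto_of_tendsto_of_le_of_le' tendsto_const_nhds hlim ?_ ?_
  · filter_upwards [eventually_gt_atTop 0] with R hR
    exact div_nonneg (integral_nonneg fun ω => (Finset.le_fold_max _).2 (Or.inl le_rfl)) hR.le
  · filter_upwards [eventually_gt_atTop 0] with R hR using hbound R hR

/-- Let `(X i)` be i.i.d. real random variables with `E[X₁²] < ∞`, and let
`λ > 0`. For each `R > 0`, let `N R` be a Poisson random variable with mean `λ·R`, independent
of the sequence `(X i)`. Then `E[max_{1 ≤ i ≤ N R} (X i)²] / R → 0` as `R → ∞` (the maximum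
over an empty index set being `0`). -/
theorem poisson_max_square_expectation_tendsto_zero
    {Ω : Type*} [MeasurableSpace Ω] (P : Measure Ω) [IsProbabilityMeasure P]
    (X : ℕ → Ω → ℝ) (hXmeas : ∀ i, Measurable (X i))
    (hXindep : iIndepFun X P)
    (hXident : ∀ i, Measure.map (X i) P = Measure.map (X 1) P)
    (hXsq : Integrable (fun ω => (X 1 ω) ^ 2) P)
    (lam : ℝ) (hlam : 0 < lam)
    (N : ℝ → Ω → ℕ) (hNmeas : ∀ R, Measurable (N R))
    (hNpoisson : ∀ R > 0, ∀ k : ℕ,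
      P {ω | N R ω = k} =
        ENNReal.ofReal (Real.exp (-(lam * R)) * (lam * R) ^ k / (Nat.factorial k)))
    (hNindep : ∀ R > 0, IndepFun (N R) (fun ω i => X i ω) P) :
    Tendsto
      (fun R : ℝ =>
        (∫ ω, Finset.fold max 0 (fun i => (X i ω) ^ 2) (Finset.Icc 1 (N R ω)) ∂P) / R)
      atTop (nhds 0) :=
  poisson_max_square_expectation_tendsto_zero_general P X hXmeas hXident hXsq lam hlam N hNmeas
    hNpoisson hNindep
end

section
/- Let (X_i)_{i≥1} be independent and identically distributed real-valued random variables with E[X_1^2] < ∞, and let N be a Poisson random variable with mean μ > 0 that is independent of the sequence (X_i)_{i≥1}. Then for every y > 0, E[ max_{1≤i≤N} X_i^2 ] ≤ y^2 + μ · E[ X_1^2 · 1_{|X_1| > y} ], where the maximum over an empty index set is taken to be 0. -/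
/-!
Pointwise, every `X i ^ 2` with `i ≤ N` is either at most `y ^ 2` or one of the summands of
`∑_{i ≤ N} X i ^ 2 · 1{|X i| > y}`, so the maximum is bounded by `y ^ 2` plus that sum. Since `N`
is independent of the sequence and the `X i` share the law of `X 1`, Wald's identity gives the sum
the expectation `E[N] · E[X 1 ^ 2 · 1{|X 1| > y}]`, and `E[N] = μ`.
-/

open MeasureTheory ProbabilityTheory Filter

open scoped ENNReal Nat

theorem Finset.fold_max_le_add_sum_ite {ι : Type*} (s : Finset ι) {g : ι → ℝ} {t : ℝ}
    (p : ι → Prop) [DecidablePred p] (ht : 0 ≤ t) (hg : ∀ i, 0 ≤ g i)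
    (hp : ∀ i, ¬ p i → g i ≤ t) :
    s.fold max 0 g ≤ t + ∑ i ∈ s, if p i then g i else 0 := by
  have hsum : 0 ≤ ∑ i ∈ s, if p i then g i else 0 :=
    Finset.sum_nonneg fun i _ => by split_ifs <;> simp [hg]
  refine (Finset.fold_max_le _).2 ⟨by linarith, fun i hi => ?_⟩
  by_cases hpi : p i
  · have := Finset.single_le_sum (f := fun i => if p i then g i else 0)
      (fun j _ => by split_ifs <;> simp [hg]) hi
    simp only [hpi, if_true] at this
    linarith
  · linarith [hp i hpi]

theorem ENNReal.ofReal_fold_max_sq_le {ι : Type*} (s : Finset ι) (x : ι → ℝ) (y : ℝ) :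
    ENNReal.ofReal (s.fold max 0 fun i => x i ^ 2)
      ≤ ENNReal.ofReal (y ^ 2) + ∑ i ∈ s, ENNReal.ofReal (if y < |x i| then x i ^ 2 else 0) := by
  have htrunc : ∀ i, 0 ≤ if y < |x i| then x i ^ 2 else 0 := fun i => by
    split_ifs <;> positivity
  rw [← ENNReal.ofReal_sum_of_nonneg fun i _ => htrunc i,
    ← ENNReal.ofReal_add (by positivity) (Finset.sum_nonneg fun i _ => htrunc i)]
  refine ENNReal.ofReal_le_ofReal
    (s.fold_max_le_add_sum_ite _ (sq_nonneg y) (fun i => sq_nonneg _) fun i hi => ?_)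
  simpa only [sq_abs] using pow_le_pow_left₀ (abs_nonneg (x i)) (not_lt.1 hi) 2

namespace ProbabilityTheory

variable {Ω β : Type*} [MeasurableSpace Ω] [MeasurableSpace β] {P : Measure Ω}

theorem IndepFun.lintegral_comp_eq_tsum [IsFiniteMeasure P] {N : Ω → ℕ} {Z : Ω → β}
    (hNZ : IndepFun N Z P) (hN : Measurable N) (hZ : Measurable Z)
    {Φ : ℕ → β → ℝ≥0∞} (hΦ : ∀ n, Measurable (Φ n)) :
    ∫⁻ ω, Φ (N ω) (Z ω) ∂P = ∑' n, P (N ⁻¹' {n}) * ∫⁻ ω, Φ n (Z ω) ∂P := by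
  have hΦ' : Measurable (Function.uncurry Φ) := measurable_from_prod_countable_right hΦ
  calc ∫⁻ ω, Φ (N ω) (Z ω) ∂P
      = ∫⁻ p, Function.uncurry Φ p ∂(P.map N).prod (P.map Z) := by
        rw [← (indepFun_iff_map_prod_eq_prod_map_map hN.aemeasurable hZ.aemeasurable).1 hNZ,
          lintegral_map hΦ' (hN.prodMk hZ)]
        rfl
    _ = ∑' n, P (N ⁻¹' {n}) * ∫⁻ ω, Φ n (Z ω) ∂P := by
        rw [lintegral_prod _ hΦ'.aemeasurable, lintegral_countable']
        refine tsum_congr fun n => ?_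
        rw [Measure.map_apply hN (measurableSet_singleton n), mul_comm]
        exact congrArg _ (lintegral_map (hΦ n) hZ)

theorem lintegral_natCast_eq_tsum {N : Ω → ℕ} (hN : Measurable N) :
    ∫⁻ ω, (N ω : ℝ≥0∞) ∂P = ∑' n : ℕ, n * P (N ⁻¹' {n}) := by
  rw [← lintegral_map (f := fun n : ℕ => (n : ℝ≥0∞)) measurable_from_nat hN, lintegral_countable']
  simp_rw [Measure.map_apply hN (measurableSet_singleton _)]

theorem IndepFun.lintegral_sum_Icc_eq_mul [IsFiniteMeasure P] {N : Ω → ℕ} {Z : Ω → β}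
    (hNZ : IndepFun N Z P) (hN : Measurable N) (hZ : Measurable Z)
    {F : ℕ → β → ℝ≥0∞} (hF : ∀ i, Measurable (F i)) {c : ℝ≥0∞}
    (hc : ∀ i, 1 ≤ i → ∫⁻ ω, F i (Z ω) ∂P = c) :
    ∫⁻ ω, ∑ i ∈ Finset.Icc 1 (N ω), F i (Z ω) ∂P = (∫⁻ ω, (N ω : ℝ≥0∞) ∂P) * c := by
  have hsum : ∀ n, ∫⁻ ω, ∑ i ∈ Finset.Icc 1 n, F i (Z ω) ∂P = n * c := by
    intro n
    rw [lintegral_finsetSum (f := fun i ω => F i (Z ω)) _ fun i _ => (hF i).comp hZ,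
      Finset.sum_congr rfl fun i hi => hc i (Finset.mem_Icc.1 hi).1]
    simp
  rw [hNZ.lintegral_comp_eq_tsum (Φ := fun n z => ∑ i ∈ Finset.Icc 1 n, F i z) hN hZ
      fun n => Finset.measurable_sum _ fun i _ => hF i,
    lintegral_natCast_eq_tsum hN, ← ENNReal.tsum_mul_right]
  simp_rw [hsum, mul_comm, mul_assoc]

theorem hasSum_natCast_mul_poisson {μ : ℝ} (hμ : 0 ≤ μ) :
    HasSum (fun n : ℕ => n * (Real.exp (-μ) * μ ^ n / n !)) μ := by
  have hshift : ∀ n : ℕ, ((n + 1 : ℕ) : ℝ) * (Real.exp (-μ) * μ ^ (n + 1) / (n + 1)!)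
      = μ * (Real.exp (-μ) * μ ^ n / n !) := fun n => by
    rw [Nat.factorial_succ]
    push_cast
    field_simp
    ring
  rw [← hasSum_nat_add_iff' 1, Finset.sum_range_one, Nat.cast_zero, zero_mul, sub_zero,
    funext hshift]
  have h := (hasSum_one_poissonMeasure ⟨μ, hμ⟩).mul_left μ
  rw [mul_one] at h
  exact h

theorem lintegral_natCast_eq_ofReal_of_poisson {N : Ω → ℕ} (hN : Measurable N) {μ : ℝ}
    (hμ : 0 ≤ μ)
    (hNpoisson : ∀ k : ℕ, P {ω | N ω = k} = ENNReal.ofReal (Real.exp (-μ) * μ ^ k / k !)) :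
    ∫⁻ ω, (N ω : ℝ≥0∞) ∂P = ENNReal.ofReal μ := by
  rw [lintegral_natCast_eq_tsum hN, ← (hasSum_natCast_mul_poisson hμ).tsum_eq,
    ENNReal.ofReal_tsum_of_nonneg (fun n => by positivity)
      (hasSum_natCast_mul_poisson hμ).summable]
  refine tsum_congr fun n => ?_
  rw [ENNReal.ofReal_mul n.cast_nonneg, ENNReal.ofReal_natCast]
  exact congrArg _ (hNpoisson n)

end ProbabilityTheory

theorem poisson_max_square_truncation_bound_general
    {Ω : Type*} [MeasurableSpace Ω] (P : Measure Ω) [IsProbabilityMeasure P]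
    (X : ℕ → Ω → ℝ) (hXmeas : ∀ i, Measurable (X i))
    (hXident : ∀ i, Measure.map (X i) P = Measure.map (X 1) P)
    (μ : ℝ) (hμ : 0 < μ)
    (N : Ω → ℕ) (hNmeas : Measurable N)
    (hNpoisson : ∀ k : ℕ,
      P {ω | N ω = k} = ENNReal.ofReal (Real.exp (-μ) * μ ^ k / (Nat.factorial k)))
    (hNindep : IndepFun N (fun ω i => X i ω) P) :
    ∀ y > 0,
      ∫⁻ ω, ENNReal.ofReal (Finset.fold max 0 (fun i => (X i ω) ^ 2) (Finset.Icc 1 (N ω))) ∂P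
        ≤ ENNReal.ofReal (y ^ 2)
          + ENNReal.ofReal μ *
              ∫⁻ ω, ENNReal.ofReal (if y < |X 1 ω| then (X 1 ω) ^ 2 else 0) ∂P := by
  intro y _
  set T : ℝ → ℝ≥0∞ := fun x => ENNReal.ofReal (if y < |x| then x ^ 2 else 0)
  have hT : Measurable T := ENNReal.measurable_ofReal.comp <|
    Measurable.ite (measurableSet_lt measurable_const measurable_abs)
      (measurable_id.pow_const 2) measurable_const
  have hXT : ∀ i, 1 ≤ i → ∫⁻ ω, T (X i ω) ∂P = ∫⁻ ω, T (X 1 ω) ∂P := fun i _ =>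
    have hident : IdentDistrib (X i) (X 1) P P :=
      ⟨(hXmeas i).aemeasurable, (hXmeas 1).aemeasurable, hXident i⟩
    (hident.comp hT).lintegral_eq
  calc _ ≤ ∫⁻ ω, ENNReal.ofReal (y ^ 2) + ∑ i ∈ Finset.Icc 1 (N ω), T (X i ω) ∂P :=
        lintegral_mono fun ω => ENNReal.ofReal_fold_max_sq_le _ _ y
    _ = ENNReal.ofReal (y ^ 2) + (∫⁻ ω, (N ω : ℝ≥0∞) ∂P) * ∫⁻ ω, T (X 1 ω) ∂P := by
        rw [lintegral_add_left measurable_const, lintegral_const, measure_univ, mul_one,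
          hNindep.lintegral_sum_Icc_eq_mul (F := fun i v => T (v i)) hNmeas
            (measurable_pi_lambda _ hXmeas) (fun i => hT.comp (measurable_pi_apply i)) hXT]
    _ = _ := by rw [lintegral_natCast_eq_ofReal_of_poisson hNmeas hμ.le hNpoisson]

/-- Let `(X i)` be i.i.d. real random variables with `E[X₁²] < ∞`, and let `N`
be a Poisson random variable with mean `μ > 0`, independent of the sequence `(X i)`. Then for
every `y > 0`, `E[max_{1 ≤ i ≤ N} (X i)²] ≤ y² + μ · E[X₁² · 1_{|X₁| > y}]` (the maximum over
an empty index set being `0`). -/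
theorem poisson_max_square_truncation_bound
    {Ω : Type*} [MeasurableSpace Ω] (P : Measure Ω) [IsProbabilityMeasure P]
    (X : ℕ → Ω → ℝ) (hXmeas : ∀ i, Measurable (X i))
    (hXindep : iIndepFun X P)
    (hXident : ∀ i, Measure.map (X i) P = Measure.map (X 1) P)
    (hXsq : Integrable (fun ω => (X 1 ω) ^ 2) P)
    (μ : ℝ) (hμ : 0 < μ)
    (N : Ω → ℕ) (hNmeas : Measurable N)
    (hNpoisson : ∀ k : ℕ,
      P {ω | N ω = k} = ENNReal.ofReal (Real.exp (-μ) * μ ^ k / (Nat.factorial k)))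
    (hNindep : IndepFun N (fun ω i => X i ω) P) :
    ∀ y > 0,
      ∫⁻ ω, ENNReal.ofReal (Finset.fold max 0 (fun i => (X i ω) ^ 2) (Finset.Icc 1 (N ω))) ∂P
        ≤ ENNReal.ofReal (y ^ 2)
          + ENNReal.ofReal μ *
              ∫⁻ ω, ENNReal.ofReal (if y < |X 1 ω| then (X 1 ω) ^ 2 else 0) ∂P :=
  poisson_max_square_truncation_bound_general P X hXmeas hXident μ hμ N hNmeas hNpoisson hNindep
end

section
/- Let (N_s)_{s≥0} be a jointly measurable family of ℕ-valued random variables on a probability space such that the zero state is absorbing: almost surely, if N_u(ω) = 0 for some u ≥ 0 then N_s(ω) = 0 for all s ≥ u. Suppose there exist constants C', C'' ∈ (0,∞) such that for all t ≥ 1, P(N_{√t} > 0) ≤ C'/√t and E[ ∫_0^{√t} N_s ds ] ≤ C'' √t. Then for all t ≥ 1, P( ∫_0^∞ N_s ds ≥ t ) ≤ (C' + C'')/√t. -/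
/-!
On the event `{N √t = 0}` absorption makes the whole tree length equal to the occupation integral
`∫_0^{√t} N_s ds`, whose tail at level `t` Markov's inequality bounds by `C'' √t / t = C'' / √t`.
The complementary event `{N √t > 0}` has probability at most `C' / √t`.
-/

open MeasureTheory Set
open scoped ENNReal

theorem setLIntegral_Ici_eq_setLIntegral_Icc_of_eq_zero {f : ℝ → ℝ≥0∞} {a r : ℝ} (har : a ≤ r)
    (hf : ∀ s, r < s → f s = 0) :
    ∫⁻ s in Ici a, f s = ∫⁻ s in Icc a r, f s := by
  rw [← Icc_union_Ioi_eq_Ici har, lintegral_union measurableSet_Ioi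
    (disjoint_left.2 fun _ hx hx' => (not_lt.2 hx.2) hx'),
    setLIntegral_congr_fun measurableSet_Ioi hf, lintegral_zero, add_zero]

theorem measurable_setLIntegral_natCast {Ω : Type*} [MeasurableSpace Ω] {N : ℝ → Ω → ℕ}
    (hN : Measurable fun p : ℝ × Ω => N p.1 p.2) (S : Set ℝ) :
    Measurable fun ω => ∫⁻ s in S, (N s ω : ℝ≥0∞) :=
  (measurable_from_top.comp hN).lintegral_prod_left'

theorem measure_le_setLIntegral_Ici_le_of_absorbing {Ω : Type*} [MeasurableSpace Ω]
    (P : Measure Ω) {N : ℝ → Ω → ℕ}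
    (habs : ∀ᵐ ω ∂P, ∀ u s : ℝ, 0 ≤ u → u ≤ s → N u ω = 0 → N s ω = 0)
    {r : ℝ} (hr : 0 ≤ r) (c : ℝ≥0∞) :
    P {ω | c ≤ ∫⁻ s in Ici 0, (N s ω : ℝ≥0∞)}
      ≤ P {ω | c ≤ ∫⁻ s in Icc 0 r, (N s ω : ℝ≥0∞)} + P {ω | 0 < N r ω} := by
  refine (measure_mono_ae ?_).trans (measure_union_le _ _)
  filter_upwards [habs] with ω hω (hc : c ≤ _)
  rcases Nat.eq_zero_or_pos (N r ω) with hextinct | hsurvive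
  · have hzero : ∀ s, r < s → (N s ω : ℝ≥0∞) = 0 := fun s hs => by
      simp [hω r s hr hs.le hextinct]
    refine Or.inl (show c ≤ _ from ?_)
    rwa [← setLIntegral_Ici_eq_setLIntegral_Icc_of_eq_zero hr hzero]
  · exact Or.inr hsurvive

theorem ENNReal.ofReal_mul_sqrt_div_ofReal {c t : ℝ} (ht : 0 < t) :
    ENNReal.ofReal (c * Real.sqrt t) / ENNReal.ofReal t = ENNReal.ofReal (c / Real.sqrt t) := by
  rw [← ENNReal.ofReal_div_of_pos ht]
  congr 1
  field_simp
  rw [Real.sq_sqrt ht.le]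

/-- Let `(N s)_{s ≥ 0}` be a jointly measurable family of `ℕ`-valued random
variables such that the zero state is absorbing. If there are constants `C', C'' ∈ (0, ∞)`
such that for all `t ≥ 1`, `P(N √t > 0) ≤ C'/√t` and `E[∫_0^{√t} N_s ds] ≤ C'' √t`, then for
all `t ≥ 1`, `P(∫_0^∞ N_s ds ≥ t) ≤ (C' + C'')/√t`. -/
theorem tree_length_tail_bound
    {Ω : Type*} [MeasurableSpace Ω] (P : Measure Ω) [IsProbabilityMeasure P]
    (N : ℝ → Ω → ℕ)
    (hNmeas : Measurable fun p : ℝ × Ω => N p.1 p.2)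
    (habs : ∀ᵐ ω ∂P, ∀ u s : ℝ, 0 ≤ u → u ≤ s → N u ω = 0 → N s ω = 0)
    (C' C'' : ℝ) (hC' : 0 < C') (hC'' : 0 < C'')
    (hsurv : ∀ t : ℝ, 1 ≤ t →
      P {ω | 0 < N (Real.sqrt t) ω} ≤ ENNReal.ofReal (C' / Real.sqrt t))
    (hocc : ∀ t : ℝ, 1 ≤ t →
      ∫⁻ ω, (∫⁻ s in Set.Icc 0 (Real.sqrt t), (N s ω : ENNReal)) ∂P
        ≤ ENNReal.ofReal (C'' * Real.sqrt t)) :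
    ∀ t : ℝ, 1 ≤ t →
      P {ω | ENNReal.ofReal t ≤ ∫⁻ s in Set.Ici (0 : ℝ), (N s ω : ENNReal)}
        ≤ ENNReal.ofReal ((C' + C'') / Real.sqrt t) := by
  intro t ht
  have ht0 : 0 < t := one_pos.trans_le ht
  have hmarkov : P {ω | ENNReal.ofReal t ≤ ∫⁻ s in Icc 0 (Real.sqrt t), (N s ω : ℝ≥0∞)}
      ≤ ENNReal.ofReal (C'' / Real.sqrt t) :=
    calc _ ≤ (∫⁻ ω, (∫⁻ s in Icc 0 (Real.sqrt t), (N s ω : ℝ≥0∞)) ∂P) / ENNReal.ofReal t :=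
          meas_ge_le_lintegral_div (measurable_setLIntegral_natCast hNmeas _).aemeasurable
            (ENNReal.ofReal_pos.mpr ht0).ne' ENNReal.ofReal_ne_top
      _ ≤ ENNReal.ofReal (C'' * Real.sqrt t) / ENNReal.ofReal t := by gcongr; exact hocc t ht
      _ = ENNReal.ofReal (C'' / Real.sqrt t) := ENNReal.ofReal_mul_sqrt_div_ofReal ht0
  calc _ ≤ _ := measure_le_setLIntegral_Ici_le_of_absorbing P habs (Real.sqrt_nonneg t) _
    _ ≤ ENNReal.ofReal (C'' / Real.sqrt t) + ENNReal.ofReal (C' / Real.sqrt t) :=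
        add_le_add hmarkov (hsurv t ht)
    _ = ENNReal.ofReal ((C' + C'') / Real.sqrt t) := by
        rw [← ENNReal.ofReal_add (by positivity) (by positivity), add_comm, add_div]
end
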